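/- arXiv:2312.02899 — 8 statements merged into one kernel-verified Lean document; each statement's English description precedes it below -/
import Mathlib

section
/- Let X be a first countable topological vector space and T : X → X a surjective continuous linear operator with a continuous right inverse S (i.e. T ∘ S = id). Then T is ultra hypercyclic for an increasing sequence (n_k) if and only if for every nonzero x ∈ X and every y ∈ X there exists a sequence (u_k) with u_k ∈ ker T^{n_k} for all k and S^{n_k} x + u_k → y. -/
open Filter Topology

/-!
Both conditions say that every `y` is the limit of a sequence `w_k` with `T^{n_k} w_k = z`,
for every `z`. For the ultra hypercyclicity side, first countability of `X` permits a diagonal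
choice of such `w_k` from the open neighbourhoods of `y`. For the other side, the fibre of
`T^{n_k}` over `z` is `S^{n_k} z + ker T^{n_k}`, and the fibre over `0` is reached by the
difference of two sequences in the fibre over some `z ≠ 0`, tending to `y` and to `0`.
-/

theorem exists_seq_mem_tendsto_of_eventually_inter_nonempty {X : Type*} [TopologicalSpace X]
    [FirstCountableTopology X] {A : ℕ → Set X} {y : X} (hA : ∀ k, (A k).Nonempty)
    (h : ∀ V ∈ 𝓝 y, ∀ᶠ k in atTop, (A k ∩ V).Nonempty) :
    ∃ w : ℕ → X, (∀ k, w k ∈ A k) ∧ Tendsto w atTop (𝓝 y) := by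
  classical
  obtain ⟨b, hb⟩ := (𝓝 y).exists_antitone_basis
  -- `w k` lies in the smallest of `b 0, …, b k` that meets `A k`, if any does.
  let M k := Nat.findGreatest (fun m => (A k ∩ b m).Nonempty) k
  have hchoice : ∀ k, ∃ w ∈ A k, (A k ∩ b (M k)).Nonempty → w ∈ b (M k) := fun k =>
    if hk : (A k ∩ b (M k)).Nonempty then ⟨hk.some, hk.some_mem.1, fun _ => hk.some_mem.2⟩
    else ⟨(hA k).some, (hA k).some_mem, fun h => absurd h hk⟩
  choose w hwA hwb using hchoice
  refine ⟨w, hwA, hb.toHasBasis.tendsto_right_iff.2 fun m _ => ?_⟩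
  filter_upwards [h _ (hb.toHasBasis.mem_of_mem trivial), eventually_ge_atTop m] with k hkm hmk
  have hM : (A k ∩ b (M k)).Nonempty :=
    Nat.findGreatest_spec (P := fun m => (A k ∩ b m).Nonempty) hmk hkm
  exact hb.antitone (Nat.le_findGreatest hmk hkm) (hwb k hM)

theorem forall_eventually_mem_image_iff_forall_exists_seq_tendsto {X Y : Type*}
    [TopologicalSpace X] [FirstCountableTopology X] (f : ℕ → X → Y)
    (hf : ∀ k, Function.Surjective (f k)) :
    (∀ U : Set X, IsOpen U → U.Nonempty → ∀ z, ∃ i, ∀ k, i ≤ k → z ∈ f k '' U) ↔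
      ∀ y z, ∃ w : ℕ → X, (∀ k, f k (w k) = z) ∧ Tendsto w atTop (𝓝 y) := by
  constructor
  · intro h y z
    refine exists_seq_mem_tendsto_of_eventually_inter_nonempty (A := fun k => f k ⁻¹' {z})
      (fun k => hf k z) fun V hV => ?_
    obtain ⟨U, hUV, hU, hyU⟩ := mem_nhds_iff.1 hV
    obtain ⟨i, hi⟩ := h U hU ⟨y, hyU⟩ z
    filter_upwards [eventually_ge_atTop i] with k hk
    obtain ⟨x, hxU, hx⟩ := hi k hk
    exact ⟨x, hx, hUV hxU⟩
  · rintro h U hU ⟨y, hyU⟩ z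
    obtain ⟨w, hwz, hwy⟩ := h y z
    obtain ⟨i, hi⟩ := eventually_atTop.1 (hwy (hU.mem_nhds hyU))
    exact ⟨i, fun k hk => ⟨w k, hi k hk, hwz k⟩⟩

theorem forall_ne_zero_exists_tendsto_add_ker_iff_forall_exists_seq_tendsto
    {X Y F : Type*} [AddCommGroup X] [TopologicalSpace X] [IsTopologicalAddGroup X]
    [AddCommGroup Y] [FunLike F X Y] [AddMonoidHomClass F X Y]
    (f : ℕ → F) (g : ℕ → Y → X) (hfg : ∀ k z, f k (g k z) = z) :
    (∀ z, z ≠ 0 → ∀ y, ∃ u : ℕ → X,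
        (∀ k, f k (u k) = 0) ∧ Tendsto (fun k => g k z + u k) atTop (𝓝 y)) ↔
      ∀ y z, ∃ w : ℕ → X, (∀ k, f k (w k) = z) ∧ Tendsto w atTop (𝓝 y) := by
  constructor
  · intro h
    have hne : ∀ y z, z ≠ 0 → ∃ w : ℕ → X, (∀ k, f k (w k) = z) ∧ Tendsto w atTop (𝓝 y) := by
      intro y z hz
      obtain ⟨u, hu, hlim⟩ := h z hz y
      exact ⟨fun k => g k z + u k, fun k => by rw [map_add, hfg, hu, add_zero], hlim⟩
    intro y z
    rcases eq_or_ne z 0 with rfl | hz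
    · rcases subsingleton_or_nontrivial Y with hY | hY
      · exact ⟨fun _ => y, fun _ => Subsingleton.elim _ _, tendsto_const_nhds⟩
      obtain ⟨z₀, hz₀⟩ := exists_ne (0 : Y)
      obtain ⟨w₁, hw₁, hlim₁⟩ := hne y z₀ hz₀
      obtain ⟨w₀, hw₀, hlim₀⟩ := hne 0 z₀ hz₀
      refine ⟨fun k => w₁ k - w₀ k, fun k => by simp [hw₁, hw₀], ?_⟩
      simpa using hlim₁.sub hlim₀
    · exact hne y z hz
  · intro h z _ y
    obtain ⟨w, hw, hlim⟩ := h y z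
    refine ⟨fun k => w k - g k z, fun k => by rw [map_sub, hw, hfg, sub_self], ?_⟩
    simpa using hlim

theorem ultra_hypercyclicity_criterion_general
    {X : Type*} [AddCommGroup X] [Module ℝ X] [TopologicalSpace X]
    [IsTopologicalAddGroup X]
    [FirstCountableTopology X]
    (T S : X →L[ℝ] X)
    (hTS : ∀ x : X, T (S x) = x)
    (n : ℕ → ℕ) :
    (∀ U : Set X, IsOpen U → U.Nonempty →
        ∀ z : X, ∃ i : ℕ, ∀ k : ℕ, i ≤ k → z ∈ (⇑(T ^ (n k))) '' U) ↔
    (∀ x : X, x ≠ 0 → ∀ y : X, ∃ u : ℕ → X,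
        (∀ k, (T ^ (n k)) (u k) = 0) ∧
        Tendsto (fun k => (S ^ (n k)) x + u k) atTop (𝓝 y)) := by
  have hpow : ∀ m z, (T ^ m) ((S ^ m) z) = z := fun m => by
    simp only [FunLike.coe_pow_eq_iterate]
    exact Function.LeftInverse.iterate hTS m
  exact (forall_eventually_mem_image_iff_forall_exists_seq_tendsto (fun k => ⇑(T ^ n k))
      fun k z => ⟨_, hpow (n k) z⟩).trans
    (forall_ne_zero_exists_tendsto_add_ker_iff_forall_exists_seq_tendsto (fun k => T ^ n k)
      (fun k => ⇑(S ^ n k)) fun k => hpow (n k)).symm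

/-- **Ultra hypercyclicity criterion.** Let `X` be a first countable topological vector
space and `T : X → X` a surjective continuous linear operator with continuous right
inverse `S` (i.e. `T ∘ S = id`). Then `T` is ultra hypercyclic for an increasing sequence
`(n_k)` of positive integers iff for every nonzero `x` and every `y` there is a sequence
`(u_k)` with `u_k ∈ ker T^{n_k}` and `S^{n_k} x + u_k → y`. -/
theorem ultra_hypercyclicity_criterion
    {X : Type*} [AddCommGroup X] [Module ℝ X] [TopologicalSpace X]
    [IsTopologicalAddGroup X] [ContinuousSMul ℝ X]
    [FirstCountableTopology X]
    (T S : X →L[ℝ] X) (hsurj : Function.Surjective T)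
    (hTS : ∀ x : X, T (S x) = x)
    (n : ℕ → ℕ) (hn : StrictMono n) (hn1 : ∀ k, 1 ≤ n k) :
    (∀ U : Set X, IsOpen U → U.Nonempty →
        ∀ z : X, ∃ i : ℕ, ∀ k : ℕ, i ≤ k → z ∈ (⇑(T ^ (n k))) '' U) ↔
    (∀ x : X, x ≠ 0 → ∀ y : X, ∃ u : ℕ → X,
        (∀ k, (T ^ (n k)) (u k) = 0) ∧
        Tendsto (fun k => (S ^ (n k)) x + u k) atTop (𝓝 y)) :=
  ultra_hypercyclicity_criterion_general T S hTS n
end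

section
/- No ultra hypercyclic surjective continuous linear operator T on a first countable topological vector space X (with X containing at least two distinct points) is injective. -/
/-! Taking for `U` the complement of `{0}`, ultra hypercyclicity puts `0` in `T ^ (n k) '' U`
for large `k`; but an injective linear map and all its powers send only `0` to `0`. -/

theorem ContinuousLinearMap.zero_notMem_image_pow_of_injective {R M : Type*} [Semiring R]
    [AddCommMonoid M] [Module R M] [TopologicalSpace M] {T : M →L[R] M}
    (hT : Function.Injective T) {U : Set M} (hU : (0 : M) ∉ U) (m : ℕ) :
    (0 : M) ∉ ⇑(T ^ m) '' U := by
  rw [← map_zero (T ^ m), FunLike.coe_pow_eq_iterate, (hT.iterate m).mem_set_image]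
  exact hU

theorem ultra_hypercyclic_not_injective_general
    {X : Type*} [AddCommGroup X] [Module ℝ X] [TopologicalSpace X]
    [T2Space X]
    (hX : ∃ x y : X, x ≠ y)
    (T : X →L[ℝ] X)
    (hUH : ∃ n : ℕ → ℕ, StrictMono n ∧ (∀ k, 1 ≤ n k) ∧
      ∀ U : Set X, IsOpen U → U.Nonempty →
        ∀ z : X, ∃ i : ℕ, ∀ k : ℕ, i ≤ k → z ∈ (⇑(T ^ (n k))) '' U) :
    ¬ Function.Injective T := by
  intro hinj
  obtain ⟨x, y, hxy⟩ := hX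
  have := nontrivial_of_ne x y hxy
  obtain ⟨n, -, -, hcover⟩ := hUH
  obtain ⟨i, hi⟩ := hcover {0}ᶜ isOpen_compl_singleton (exists_ne 0) 0
  exact ContinuousLinearMap.zero_notMem_image_pow_of_injective hinj (by simp) (n i) (hi i le_rfl)

/-- No ultra hypercyclic surjective continuous linear operator on a first countable
Hausdorff topological vector space with at least two points is injective. -/
theorem ultra_hypercyclic_not_injective
    {X : Type*} [AddCommGroup X] [Module ℝ X] [TopologicalSpace X]
    [IsTopologicalAddGroup X] [ContinuousSMul ℝ X]
    [FirstCountableTopology X] [T2Space X]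
    (hX : ∃ x y : X, x ≠ y)
    (T : X →L[ℝ] X) (hsurj : Function.Surjective T)
    (hUH : ∃ n : ℕ → ℕ, StrictMono n ∧ (∀ k, 1 ≤ n k) ∧
      ∀ U : Set X, IsOpen U → U.Nonempty →
        ∀ z : X, ∃ i : ℕ, ∀ k : ℕ, i ≤ k → z ∈ (⇑(T ^ (n k))) '' U) :
    ¬ Function.Injective T :=
  ultra_hypercyclic_not_injective_general hX T hUH
end

section
/- Let B_w be a surjective weighted backward shift on ℓ^p (1 ≤ p < ∞) or c₀ with weight sequence w (so inf_n w_n > 0 and sup_n w_n < ∞), and let S be the associated weighted forward shift S e_n = e_{n+1}/w_{n+1}. If (n_k) is an increasing sequence of positive integers such that lim_k M_1^{n_k} = ∞ and inf_{i,k} M_i^{n_k} > 0, then S^{n_k} x → 0 for every x in the space. -/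
/-!
Write `S^n x` as the sequence `x_i / M_{i+1}^n` shifted `n` places to the right; the shift
changes neither the `ℓ^p` norm nor the supremum. Each coordinate `x_i / M_{i+1}^{n_k}` tends to
`0`, since `M_1^i M_{i+1}^n = M_1^{n+i} ≥ δ^i M_1^n` with `δ = inf w > 0` forces
`M_{i+1}^{n_k} → ∞`, and is dominated by `|x_i| / c` with `c = inf_{i,k} M_i^{n_k}`.
Dominated convergence, for series in `ℓ^p` and its elementary analogue in `c₀`, then gives
`S^{n_k} x → 0`.
-/

open Filter Topology

/-- `Mw w i k = w i * w (i+1) * ⋯ * w (i+k-1)`. -/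
noncomputable def Mw (w : ℕ → ℝ) (i k : ℕ) : ℝ := ∏ t ∈ Finset.range k, w (i + t)

/-- The `n`-th power of the weighted forward shift associated to `B_w`, acting
coordinatewise: `(S^n x)_{n+i} = x_i / (w_{i+1} ⋯ w_{i+n})`, zero in positions `< n`. -/
noncomputable def Siter (w : ℕ → ℝ) (n : ℕ) (x : ℕ → ℝ) : ℕ → ℝ :=
  fun j => if j < n then 0 else x (j - n) / Mw w (j - n + 1) n

theorem Mw_add (w : ℕ → ℝ) (i a b : ℕ) : Mw w i (a + b) = Mw w i a * Mw w (i + a) b := by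
  simp only [Mw, Finset.prod_range_add, add_assoc]

section Weights

variable {w : ℕ → ℝ}

theorem pow_le_Mw {δ : ℝ} (hδ : 0 ≤ δ) (hw : ∀ n, 1 ≤ n → δ ≤ w n) {i : ℕ} (hi : 1 ≤ i)
    (k : ℕ) : δ ^ k ≤ Mw w i k := by
  simpa [Mw] using Finset.prod_le_prod (s := Finset.range k) (fun _ _ => hδ)
    (fun t _ => hw (i + t) (by omega))

theorem tendsto_Mw_atTop {α : Type*} {l : Filter α} {f : α → ℕ} {δ : ℝ} (hδ : 0 < δ)
    (hw : ∀ n, 1 ≤ n → δ ≤ w n) (h : Tendsto (fun a => Mw w 1 (f a)) l atTop) (i : ℕ) :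
    Tendsto (fun a => Mw w (i + 1) (f a)) l atTop := by
  have hMi : 0 < Mw w 1 i := (pow_pos hδ i).trans_le (pow_le_Mw hδ.le hw le_rfl i)
  refine tendsto_atTop_mono (fun a => ?_) (h.const_mul_atTop (div_pos (pow_pos hδ i) hMi))
  have hMa : 0 ≤ Mw w 1 (f a) := (pow_nonneg hδ.le _).trans (pow_le_Mw hδ.le hw le_rfl _)
  rw [div_mul_eq_mul_div, div_le_iff₀ hMi]
  calc δ ^ i * Mw w 1 (f a) ≤ Mw w (1 + f a) i * Mw w 1 (f a) :=
        mul_le_mul_of_nonneg_right (pow_le_Mw hδ.le hw (by omega) i) hMa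
    _ = Mw w 1 (f a + i) := by rw [Mw_add, mul_comm]
    _ = Mw w (i + 1) (f a) * Mw w 1 i := by rw [add_comm (f a), Mw_add, mul_comm, add_comm 1 i]

end Weights

section Shift

variable (w : ℕ → ℝ) (n : ℕ) (x : ℕ → ℝ)

theorem Siter_of_lt {j : ℕ} (h : j < n) : Siter w n x j = 0 := if_pos h

theorem Siter_add (i : ℕ) : Siter w n x (i + n) = x i / Mw w (i + 1) n := by
  simp [Siter]

theorem tsum_abs_Siter_rpow {p : ℝ} (hp : p ≠ 0) :
    ∑' j, |Siter w n x j| ^ p = ∑' i, |x i / Mw w (i + 1) n| ^ p := by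
  rw [← (add_left_injective n).tsum_eq]
  · simp only [Siter_add]
  · intro j hj
    by_cases h : j < n
    · simp [Siter_of_lt w n x h, Real.zero_rpow hp] at hj
    · exact ⟨j - n, Nat.sub_add_cancel (not_lt.1 h)⟩

theorem iSup_abs_Siter_le (hx : BddAbove (Set.range fun i => |x i / Mw w (i + 1) n|)) :
    ⨆ j, |Siter w n x j| ≤ ⨆ i, |x i / Mw w (i + 1) n| := by
  refine ciSup_le fun j => ?_
  by_cases h : j < n
  · rw [Siter_of_lt w n x h, abs_zero]
    exact Real.iSup_nonneg fun _ => abs_nonneg _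
  · obtain ⟨i, rfl⟩ : ∃ i, j = i + n := ⟨j - n, (Nat.sub_add_cancel (not_lt.1 h)).symm⟩
    rw [Siter_add]
    exact le_ciSup hx i

end Shift

section DominatedConvergence

variable {ι : Type*} {l : Filter ι} {g : ι → ℕ → ℝ} {b : ℕ → ℝ}

theorem tendsto_tsum_rpow_of_dominated {p : ℝ} (hp : 0 < p) (hb : Summable fun i => b i ^ p)
    (hg : ∀ i, Tendsto (fun k => g k i) l (𝓝 0)) (hgb : ∀ k i, |g k i| ≤ b i) :
    Tendsto (fun k => (∑' i, |g k i| ^ p) ^ (1 / p)) l (𝓝 0) := by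
  have hsum : Tendsto (fun k => ∑' i, |g k i| ^ p) l (𝓝 0) := by
    simpa using tendsto_tsum_of_dominated_convergence (g := fun _ => (0 : ℝ)) hb
      (fun i => by simpa [Real.zero_rpow hp.ne'] using ((hg i).abs.rpow_const (.inr hp.le)))
      (.of_forall fun k i => by
        rw [Real.norm_of_nonneg (by positivity)]
        exact Real.rpow_le_rpow (abs_nonneg _) (hgb k i) hp.le)
  simpa only [Real.zero_rpow (one_div_pos.2 hp).ne'] using
    hsum.rpow_const (p := 1 / p) (.inr (one_div_pos.2 hp).le)

theorem tendsto_iSup_abs_of_dominated (hb : Tendsto b atTop (𝓝 0))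
    (hg : ∀ i, Tendsto (fun k => g k i) l (𝓝 0)) (hgb : ∀ k i, |g k i| ≤ b i) :
    Tendsto (fun k => ⨆ i, |g k i|) l (𝓝 0) := by
  refine Metric.tendsto_nhds.2 fun ε hε => ?_
  obtain ⟨N, hN⟩ := eventually_atTop.1 (hb.eventually (gt_mem_nhds (half_pos hε)))
  have hhead : ∀ᶠ k in l, ∀ i ∈ Finset.range N, |g k i| < ε / 2 :=
    (Finset.range N).eventually_all.2 fun i _ =>
      (hg i).abs.eventually (gt_mem_nhds (by simpa using half_pos hε))
  filter_upwards [hhead] with k hk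
  have hle : ⨆ i, |g k i| ≤ ε / 2 := ciSup_le fun i => by
    rcases lt_or_ge i N with hi | hi
    · exact (hk i (Finset.mem_range.2 hi)).le
    · exact (hgb k i).trans (hN i hi).le
  rw [Real.dist_eq, sub_zero, abs_of_nonneg (Real.iSup_nonneg fun _ => abs_nonneg _)]
  linarith

end DominatedConvergence

theorem UH_iii_implies_ii_general (p : ℝ) (hp : 1 ≤ p)
    (w : ℕ → ℝ)
    (hlb : ∃ δ > (0 : ℝ), ∀ n, 1 ≤ n → δ ≤ w n)
    (nk : ℕ → ℕ)
    (hlim : Tendsto (fun k => Mw w 1 (nk k)) atTop atTop)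
    (hinf : ∃ c > (0 : ℝ), ∀ i, 1 ≤ i → ∀ k, c ≤ Mw w i (nk k)) :
    (∀ x : ℕ → ℝ, Summable (fun j => |x j| ^ p) →
        Tendsto (fun k => (∑' j, |Siter w (nk k) x j| ^ p) ^ (1 / p)) atTop (𝓝 0)) ∧
    (∀ x : ℕ → ℝ, Tendsto x atTop (𝓝 0) →
        Tendsto (fun k => ⨆ j, |Siter w (nk k) x j|) atTop (𝓝 0)) := by
  obtain ⟨δ, hδ, hδw⟩ := hlb
  obtain ⟨c, hc, hcM⟩ := hinf
  have hp0 : 0 < p := zero_lt_one.trans_le hp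
  have hcoord (x : ℕ → ℝ) (i : ℕ) :
      Tendsto (fun k => x i / Mw w (i + 1) (nk k)) atTop (𝓝 0) :=
    tendsto_const_nhds.div_atTop (tendsto_Mw_atTop hδ hδw hlim i)
  have hdom (x : ℕ → ℝ) (k i : ℕ) : |x i / Mw w (i + 1) (nk k)| ≤ |x i| / c := by
    have hM := hcM (i + 1) (by omega) k
    rw [abs_div, abs_of_pos (hc.trans_le hM)]
    exact div_le_div_of_nonneg_left (abs_nonneg _) hc hM
  refine ⟨fun x hx => ?_, fun x hx => ?_⟩
  · simp only [tsum_abs_Siter_rpow w _ x hp0.ne']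
    refine tendsto_tsum_rpow_of_dominated hp0 ?_ (hcoord x) (hdom x)
    simpa only [Real.div_rpow (abs_nonneg _) hc.le] using hx.div_const (c ^ p)
  · have hb : Tendsto (fun i => |x i| / c) atTop (𝓝 0) := by simpa using hx.abs.div_const c
    obtain ⟨B, hB⟩ := hb.bddAbove_range
    refine squeeze_zero (fun _ => Real.iSup_nonneg fun _ => abs_nonneg _)
      (fun k => iSup_abs_Siter_le w _ x ⟨B, ?_⟩)
      (tendsto_iSup_abs_of_dominated hb (hcoord x) (hdom x))
    rintro _ ⟨i, rfl⟩
    exact (hdom x k i).trans (hB ⟨i, rfl⟩)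

/-- If `B_w` is a surjective weighted backward shift on `ℓ^p` (`1 ≤ p < ∞`) or `c₀`,
and `(n_k)` is increasing with `M_1^{n_k} → ∞` and `inf_{i,k} M_i^{n_k} > 0`,
then `S^{n_k} x → 0` (in norm) for every `x` in the space. -/
theorem UH_iii_implies_ii (p : ℝ) (hp : 1 ≤ p)
    (w : ℕ → ℝ) (hw : ∀ n, 1 ≤ n → 0 < w n)
    (hub : ∃ C : ℝ, ∀ n, 1 ≤ n → w n ≤ C)
    (hlb : ∃ δ > (0 : ℝ), ∀ n, 1 ≤ n → δ ≤ w n)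
    (nk : ℕ → ℕ) (hmono : StrictMono nk) (hpos : ∀ k, 1 ≤ nk k)
    (hlim : Tendsto (fun k => Mw w 1 (nk k)) atTop atTop)
    (hinf : ∃ c > (0 : ℝ), ∀ i, 1 ≤ i → ∀ k, c ≤ Mw w i (nk k)) :
    (∀ x : ℕ → ℝ, Summable (fun j => |x j| ^ p) →
        Tendsto (fun k => (∑' j, |Siter w (nk k) x j| ^ p) ^ (1 / p)) atTop (𝓝 0)) ∧
    (∀ x : ℕ → ℝ, Tendsto x atTop (𝓝 0) →
        Tendsto (fun k => ⨆ j, |Siter w (nk k) x j|) atTop (𝓝 0)) :=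
  UH_iii_implies_ii_general p hp w hlb nk hlim hinf
end

section
/- There exists a bounded sequence w of positive reals with inf_n w_n > 0 such that M_1^n = 1 for infinitely many n (hence lim_n M_1^n ≠ ∞), yet there is an increasing sequence (n_k) of positive integers with M_1^{n_k} = 2^{k+1} for all k and inf_{i,k} M_i^{n_k} > 1/2. -/
open Filter Topology

/-!
Put `w n = √2 ^ (S n - S (n - 1))` for an integer height `S : ℕ → ℤ` with `S 0 = 0`, so that
`M_i^n = √2 ^ (S (i - 1 + n) - S (i - 1))`. It suffices to find a 1-Lipschitz `S ≥ 0` vanishing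
infinitely often, with `S n_k = 2k + 2`, and dropping by at most one under each shift `m ↦ m + n_k`.

With `n_k = 3 A_k` for fast-growing `A` (here `A_k = (2k + 2)!`), let `S` be the upper envelope of
`0` and of the tents `min (m - a, b - m, 2j + 2 - r)` whose base `[a, b]` is `[2 A_j, 4 A_j]`
translated by a sum of `r` of the `n_k`. Translating such a tent by one more `n_k` lowers it by one,
which is the shift property. At `n_k` the tents of the hills `j > k` have not started and the others
are at most `2k + 2`, the height of hill `k` itself. A tent positive at `z_t = (6t + 7) A_t` would
have `j ≤ t` and at most `2t + 1` shifts, all by some `n_k ≤ n_t`, so its base would end by `z_t`.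
-/

namespace UltraHypercyclicNotMixing

theorem not_tendsto_atTop_of_frequently_eq {β α : Type*} [Preorder α] [NoMaxOrder α]
    {l : Filter β} {u : β → α} {c : α} (h : ∃ᶠ x in l, u x = c) : ¬Tendsto u l atTop :=
  fun hu => by
    obtain ⟨x, hx, hgt⟩ := (h.and_eventually (hu.eventually_gt_atTop c)).exists
    exact hgt.ne' hx

theorem Mw_zpow_sub (a : ℝ) (ha : a ≠ 0) (S : ℕ → ℤ) (b n : ℕ) :
    Mw (fun m => a ^ (S m - S (m - 1))) (b + 1) n = a ^ (S (b + n) - S b) := by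
  induction n with
  | zero => simp [Mw]
  | succ n ih =>
    rw [Mw] at ih ⊢
    rw [Finset.prod_range_succ, ih, ← zpow_add₀ ha]
    congr 1
    rw [show b + 1 + n - 1 = b + n by omega, ← add_assoc, add_right_comm b 1 n]
    ring

section SupHeight

variable {ι α : Type*}

noncomputable def supHeight (f : ι → α → ℤ) (x : α) : ℤ :=
  sSup (insert 0 (Set.range fun i => f i x))

variable {f : ι → α → ℤ}

theorem le_supHeight {x : α} (hf : BddAbove (Set.range fun i => f i x)) (i : ι) :
    f i x ≤ supHeight f x :=
  le_csSup (hf.insert 0) (Set.mem_insert_of_mem _ ⟨i, rfl⟩)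

theorem supHeight_nonneg {x : α} (hf : BddAbove (Set.range fun i => f i x)) :
    0 ≤ supHeight f x :=
  le_csSup (hf.insert 0) (Set.mem_insert _ _)

theorem supHeight_le {x : α} {v : ℤ} (hv : 0 ≤ v) (h : ∀ i, f i x ≤ v) :
    supHeight f x ≤ v :=
  csSup_le (Set.insert_nonempty _ _) <| by
    rintro _ (rfl | ⟨i, rfl⟩)
    exacts [hv, h i]

theorem supHeight_le_supHeight_add {x y : α} (hf : BddAbove (Set.range fun i => f i y))
    {c : ℤ} (hc : 0 ≤ c) (h : ∀ i, ∃ i', f i x ≤ f i' y + c) :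
    supHeight f x ≤ supHeight f y + c :=
  supHeight_le (by linarith [supHeight_nonneg hf]) fun i => by
    obtain ⟨i', hi'⟩ := h i
    linarith [le_supHeight hf i']

end SupHeight

def tent (a b h m : ℤ) : ℤ := min (min (m - a) (b - m)) h

theorem tent_le_sub (a b h m : ℤ) : tent a b h m ≤ m - a :=
  (min_le_left _ _).trans (min_le_left _ _)

theorem tent_le_height (a b h m : ℤ) : tent a b h m ≤ h := min_le_right _ _

theorem tent_le_add_one_of_abs_sub_le {m m' : ℤ} (hm : |m - m'| ≤ 1) (a b h : ℤ) :
    tent a b h m ≤ tent a b h m' + 1 := by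
  rw [abs_le] at hm
  simp only [tent, min_def]
  split_ifs <;> omega

theorem tent_le_tent_translate (a b h m s : ℤ) :
    tent a b h m ≤ tent (a + s) (b + s) (h - 1) (m + s) + 1 := by
  simp only [tent, min_def]
  split_ifs <;> omega

section Hills

variable (A : ℕ → ℕ)

def offset (l : List ℕ) : ℕ := (l.map fun k => 3 * A k).sum

@[simp]
theorem offset_nil : offset A [] = 0 := rfl

@[simp]
theorem offset_cons (k : ℕ) (l : List ℕ) : offset A (k :: l) = 3 * A k + offset A l := rfl

/-- For `p = (j, l)`: hill `j`, translated by `n_k` and lowered by one for each `k ∈ l`. -/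
def hill (p : ℕ × List ℕ) (m : ℕ) : ℤ :=
  tent (2 * A p.1 + offset A p.2) (4 * A p.1 + offset A p.2) (2 * p.1 + 2 - p.2.length) m

noncomputable def height : ℕ → ℤ := supHeight (hill A)

theorem bddAbove_hill (m : ℕ) : BddAbove (Set.range fun p => hill A p m) :=
  ⟨m, by
    rintro _ ⟨p, rfl⟩
    exact (tent_le_sub _ _ _ _).trans (by omega)⟩

theorem height_nonneg (m : ℕ) : 0 ≤ height A m := supHeight_nonneg (bddAbove_hill A m)

theorem height_zero : height A 0 = 0 :=
  le_antisymm (supHeight_le le_rfl fun _ => (tent_le_sub _ _ _ _).trans (by omega))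
    (height_nonneg A 0)

theorem height_le_add_one_of_abs_sub_le {m m' : ℕ} (h : |(m : ℤ) - m'| ≤ 1) :
    height A m ≤ height A m' + 1 :=
  supHeight_le_supHeight_add (bddAbove_hill A m') zero_le_one fun p =>
    ⟨p, tent_le_add_one_of_abs_sub_le h _ _ _⟩

theorem height_le_height_add_add_one (m k : ℕ) :
    height A m ≤ height A (m + 3 * A k) + 1 :=
  supHeight_le_supHeight_add (bddAbove_hill A _) zero_le_one fun ⟨j, l⟩ =>
    ⟨(j, k :: l), by
      have := tent_le_tent_translate (2 * A j + offset A l : ℕ) (4 * A j + offset A l : ℕ)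
        (2 * j + 2 - l.length) m (3 * A k : ℕ)
      simp only [hill, offset_cons, List.length_cons]
      push_cast at this ⊢
      convert this using 3 <;> ring⟩

theorem le_offset_of_mem {k : ℕ} {l : List ℕ} (hk : k ∈ l) : 3 * A k ≤ offset A l :=
  List.single_le_sum (fun _ _ => Nat.zero_le _) _ (List.mem_map_of_mem hk)

theorem offset_le_of_forall_le {l : List ℕ} {B : ℕ} (h : ∀ k ∈ l, A k ≤ B) :
    offset A l ≤ l.length * (3 * B) := by
  simpa [offset] using List.sum_le_card_nsmul (l.map fun k => 3 * A k) (3 * B) fun x hx => by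
    obtain ⟨k, hk, rfl⟩ := List.mem_map.mp hx
    exact Nat.mul_le_mul_left 3 (h k hk)

variable {A}
variable (hgrowth : ∀ t, (6 * t + 7) * A t ≤ 2 * A (t + 1)) (hlarge : ∀ k, 2 * k + 2 ≤ A k)
include hgrowth hlarge

theorem strictMono_of_growth : StrictMono A :=
  strictMono_nat_of_lt_succ fun t => by nlinarith [hgrowth t, hlarge t]

theorem height_three_mul (k : ℕ) : height A (3 * A k) = 2 * k + 2 := by
  refine le_antisymm (supHeight_le (by positivity) fun ⟨j, l⟩ => ?_) ?_
  · rcases le_or_gt j k with hjk | hkj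
    · exact (tent_le_height _ _ _ _).trans (by omega)
    · have hAk : A (k + 1) ≤ A j := (strictMono_of_growth hgrowth hlarge).monotone hkj
      refine (tent_le_sub _ _ _ _).trans ?_
      push_cast
      nlinarith [hgrowth k]
  · calc (2 * k + 2 : ℤ) = hill A (k, []) (3 * A k) := by
          have := hlarge k
          simp only [hill, tent, offset_nil, List.length_nil]
          push_cast
          omega
      _ ≤ height A (3 * A k) := le_supHeight (bddAbove_hill A _) _

theorem height_eq_zero_of_mem_Icc {t z : ℕ}
    (hz : z ∈ Set.Icc ((6 * t + 7) * A t) (2 * A (t + 1))) :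
    height A z = 0 := by
  refine le_antisymm (supHeight_le le_rfl fun ⟨j, l⟩ => ?_) (height_nonneg A _)
  by_contra! hpos
  simp only [hill, tent, lt_min_iff] at hpos
  obtain ⟨⟨hleft, hright⟩, hlen⟩ := hpos
  obtain ⟨hlow, hhigh⟩ := hz
  replace hleft : 2 * A j + offset A l < z := by omega
  replace hright : z < 4 * A j + offset A l := by omega
  have hmono := strictMono_of_growth hgrowth hlarge
  have hj : j ≤ t := Nat.lt_add_one_iff.mp <| hmono.lt_iff_lt.mp (show A j < A (t + 1) by omega)
  have hl : ∀ k ∈ l, A k ≤ A t := fun k hk => hmono.monotone <| Nat.lt_add_one_iff.mp <|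
    hmono.lt_iff_lt.mp (show A k < A (t + 1) by have := le_offset_of_mem A hk; omega)
  have hoff : offset A l ≤ (2 * t + 1) * (3 * A t) :=
    (offset_le_of_forall_le A hl).trans (Nat.mul_le_mul_right _ (by omega))
  nlinarith [hmono.monotone hj]

end Hills

def scale (k : ℕ) : ℕ := (2 * k + 2).factorial

theorem le_scale (k : ℕ) : 2 * k + 2 ≤ scale k := Nat.self_le_factorial _

theorem scale_growth (t : ℕ) : (6 * t + 7) * scale t ≤ 2 * scale (t + 1) := by
  have hfact : scale (t + 1) = (2 * t + 4) * ((2 * t + 3) * scale t) := by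
    rw [scale, scale, show 2 * (t + 1) + 2 = 2 * t + 2 + 1 + 1 by ring, Nat.factorial_succ,
      Nat.factorial_succ]
  rw [hfact]
  nlinarith [Nat.zero_le (scale t)]

theorem strictMono_scale : StrictMono scale := strictMono_of_growth scale_growth le_scale

noncomputable def weight (n : ℕ) : ℝ := √2 ^ (height scale n - height scale (n - 1))

theorem Mw_weight (b n : ℕ) :
    Mw weight (b + 1) n = √2 ^ (height scale (b + n) - height scale b) :=
  Mw_zpow_sub _ (by positivity) _ b n

theorem Mw_weight_one (n : ℕ) : Mw weight 1 n = √2 ^ height scale n := by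
  simpa [height_zero] using Mw_weight 0 n

theorem half_lt_inv_sqrt_two : 1 / 2 < (√2)⁻¹ := by
  rw [one_div]
  exact inv_strictAnti₀ (by positivity) (by rw [Real.sqrt_lt' two_pos]; norm_num)

theorem inv_sqrt_two_le_zpow {d : ℤ} (hd : -1 ≤ d) : (√2)⁻¹ ≤ √2 ^ d := by
  simpa using zpow_le_zpow_right₀ Real.one_lt_sqrt_two.le hd

theorem weight_pos (n : ℕ) : 0 < weight n := by
  unfold weight
  positivity

theorem weight_le_sqrt_two (n : ℕ) : weight n ≤ √2 := by
  have := height_le_add_one_of_abs_sub_le scale (m := n) (m' := n - 1) (by rw [abs_le]; omega)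
  simpa [weight] using zpow_le_zpow_right₀ Real.one_lt_sqrt_two.le (show _ ≤ (1 : ℤ) by omega)

theorem inv_sqrt_two_le_weight (n : ℕ) : (√2)⁻¹ ≤ weight n := by
  have := height_le_add_one_of_abs_sub_le scale (m := n - 1) (m' := n) (by rw [abs_le]; omega)
  exact inv_sqrt_two_le_zpow (by omega)

theorem Mw_weight_one_scale (k : ℕ) : Mw weight 1 (3 * scale k) = 2 ^ (k + 1) := by
  rw [Mw_weight_one, height_three_mul scale_growth le_scale,
    show (2 * k + 2 : ℤ) = ((2 * (k + 1) : ℕ) : ℤ) by push_cast; ring, zpow_natCast, pow_mul,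
    Real.sq_sqrt zero_le_two]

theorem inv_sqrt_two_le_Mw_weight_scale (b k : ℕ) :
    (√2)⁻¹ ≤ Mw weight (b + 1) (3 * scale k) := by
  rw [Mw_weight]
  exact inv_sqrt_two_le_zpow (by linarith [height_le_height_add_add_one scale b k])

theorem Mw_weight_one_eq_one (t : ℕ) : Mw weight 1 ((6 * t + 7) * scale t) = 1 := by
  rw [Mw_weight_one, height_eq_zero_of_mem_Icc scale_growth le_scale ⟨le_rfl, scale_growth t⟩,
    zpow_zero]

end UltraHypercyclicNotMixing

/-- There is a bounded positive weight sequence `w` with `inf_n w_n > 0` such that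
`M_1^n = 1` for infinitely many `n` (so `M_1^n` does not tend to `∞`), yet there is an
increasing sequence `(n_k)` of positive integers with `M_1^{n_k} = 2^{k+1}` for all `k ≥ 1`
and `inf_{i,k} M_i^{n_k} > 1/2`. -/
theorem ultra_hypercyclic_not_mixing_example :
    ∃ w : ℕ → ℝ, (∀ n, 1 ≤ n → 0 < w n) ∧
      (∃ C : ℝ, ∀ n, 1 ≤ n → w n ≤ C) ∧
      (∃ δ > (0 : ℝ), ∀ n, 1 ≤ n → δ ≤ w n) ∧
      {n : ℕ | 1 ≤ n ∧ Mw w 1 n = 1}.Infinite ∧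
      ¬ Tendsto (fun n => Mw w 1 n) atTop atTop ∧
      ∃ nk : ℕ → ℕ, StrictMono nk ∧ (∀ k, 1 ≤ nk k) ∧
        (∀ k, 1 ≤ k → Mw w 1 (nk k) = 2 ^ (k + 1)) ∧
        ∃ c : ℝ, 1 / 2 < c ∧ ∀ i, 1 ≤ i → ∀ k, 1 ≤ k → c ≤ Mw w i (nk k) := by
  open UltraHypercyclicNotMixing in
  have hzeros : {n : ℕ | 1 ≤ n ∧ Mw weight 1 n = 1}.Infinite := by
    refine Set.infinite_of_injective_forall_mem (f := fun t => (6 * t + 7) * scale t)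
      (StrictMono.injective fun a b hab => ?_) fun t => ⟨?_, Mw_weight_one_eq_one t⟩
    · exact Nat.mul_lt_mul'' (by omega) (strictMono_scale hab)
    · nlinarith [le_scale t]
  refine ⟨weight, fun n _ => weight_pos n, ⟨√2, fun n _ => weight_le_sqrt_two n⟩,
    ⟨(√2)⁻¹, by positivity, fun n _ => inv_sqrt_two_le_weight n⟩, hzeros,
    not_tendsto_atTop_of_frequently_eq
      ((Nat.frequently_atTop_iff_infinite.mpr hzeros).mono fun _ hn => hn.2),
    fun k => 3 * scale k, fun a b hab => by dsimp only; linarith [strictMono_scale hab],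
    fun k => by dsimp only; linarith [le_scale k], fun k _ => Mw_weight_one_scale k,
    (√2)⁻¹, half_lt_inv_sqrt_two, fun i hi k _ => ?_⟩
  obtain ⟨b, rfl⟩ := Nat.exists_eq_add_of_le' hi
  exact inv_sqrt_two_le_Mw_weight_scale b k
end

section
/- Suppose B_w is a weighted backward shift on ℓ^p (1 ≤ p < ∞) with forward shift S, and there exist a > 0 and a function f : (0,a) → (0,∞) with f(x) → ∞ as x → 0⁺ such that for every ε ∈ (0,a) and every N ∈ ℕ there exists n ∈ ℕ with: (a) M_i^n > f(ε) for all i ≤ N, and (b) ε < M_i^n for all i. Then for every nonzero x ∈ ℓ^p there exists an increasing sequence (n_k) with ‖S^{n_k} x‖_p → 0; i.e., B_w is strongly hypercyclic. -/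
/-!
If `ε ≤ M_i^n` for all `i` and `F ≤ M_i^n` for `i ≤ N`, then
`‖S^n x‖_p^p ≤ ‖x‖_p^p / F^p + (∑_{i ≥ N} |x_i|^p) / ε^p`. Taking `ε` small makes `F = f(ε)`
large, then `N` large makes the tail small for this `ε`, and the hypothesis supplies `n`. Since
`M_1^n > f(ε) → ∞`, such `n` are unbounded, so `0` is a cluster point of `n ↦ ‖S^n x‖_p` and a
subsequence tends to `0`.
-/

open Filter Topology

theorem mapClusterPt_zero_of_frequently_lt {ι : Type*} {l : Filter ι} {u : ι → ℝ}
    (hu : ∀ i, 0 ≤ u i) (h : ∀ δ > 0, ∃ᶠ i in l, u i < δ) : MapClusterPt 0 l u := by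
  rw [mapClusterPt_iff_frequently]
  intro s hs
  obtain ⟨δ, hδ, hball⟩ := Metric.mem_nhds_iff.1 hs
  exact (h δ hδ).mono fun i hi => hball (by simpa [abs_of_nonneg (hu i)] using hi)

theorem tsum_div_le_sum_div_add_tsum_div {a b : ℕ → ℝ} {ε F : ℝ} (N : ℕ) (ha : Summable a)
    (ha0 : ∀ i, 0 ≤ a i) (hε : 0 < ε) (hF : 0 < F) (hb : ∀ i, ε ≤ b i)
    (hbN : ∀ i < N, F ≤ b i) :
    ∑' i, a i / b i ≤ (∑ i ∈ Finset.range N, a i) / F + (∑' i, a (i + N)) / ε := by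
  have hdiv : ∀ i, a i / b i ≤ a i / ε := fun i => div_le_div_of_nonneg_left (ha0 i) hε (hb i)
  have hs : Summable fun i => a i / b i :=
    .of_nonneg_of_le (fun i => div_nonneg (ha0 i) (hε.trans_le (hb i)).le) hdiv (ha.div_const ε)
  rw [← hs.sum_add_tsum_nat_add N, Finset.sum_div, ← tsum_div_const]
  refine add_le_add (Finset.sum_le_sum fun i hi => ?_) ?_
  · exact div_le_div_of_nonneg_left (ha0 i) hF (hbN i (Finset.mem_range.1 hi))
  · exact (hs.comp_injective (add_left_injective N)).tsum_le_tsum (fun i => hdiv (i + N))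
      ((ha.comp_injective (add_left_injective N)).div_const ε)

theorem tsum_Siter_rpow (w : ℕ → ℝ) (n : ℕ) (x : ℕ → ℝ) {p : ℝ} (hp : p ≠ 0) :
    ∑' j, |Siter w n x j| ^ p = ∑' i, |x i| ^ p / |Mw w (i + 1) n| ^ p := by
  rw [← (add_left_injective n).tsum_eq (f := fun j => |Siter w n x j| ^ p)]
  · congr with i
    simp [Siter, abs_div, Real.div_rpow (abs_nonneg _) (abs_nonneg _)]
  · refine Function.support_subset_iff'.2 fun j hj => ?_
    have hjn : j < n := by
      by_contra! h
      exact hj ⟨j - n, Nat.sub_add_cancel h⟩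
    simp [Siter, hjn, Real.zero_rpow hp]

theorem tsum_Siter_rpow_le {w : ℕ → ℝ} {n N : ℕ} {x : ℕ → ℝ} {p ε F : ℝ} (hp : 0 < p)
    (hx : Summable fun j => |x j| ^ p) (hε : 0 < ε) (hF : 0 < F)
    (hεM : ∀ i, 1 ≤ i → ε ≤ Mw w i n) (hFM : ∀ i, 1 ≤ i → i ≤ N → F ≤ Mw w i n) :
    ∑' j, |Siter w n x j| ^ p ≤
      (∑' i, |x i| ^ p) / F ^ p + (∑' i, |x (i + N)| ^ p) / ε ^ p := by
  have hpow {c : ℝ} (hc : 0 < c) {i : ℕ} (h : c ≤ Mw w (i + 1) n) : c ^ p ≤ |Mw w (i + 1) n| ^ p :=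
    Real.rpow_le_rpow hc.le (h.trans (le_abs_self _)) hp.le
  rw [tsum_Siter_rpow w n x hp.ne']
  refine (tsum_div_le_sum_div_add_tsum_div N hx (fun _ => by positivity) (by positivity)
    (by positivity) (fun i => hpow hε (hεM _ i.succ_pos))
    fun i hi => hpow hF (hFM _ i.succ_pos hi)).trans ?_
  gcongr
  exact hx.sum_le_tsum _ fun _ _ => by positivity

theorem frequently_tsum_Siter_rpow_lt {p a : ℝ} {w x : ℕ → ℝ} {f : ℝ → ℝ} (hp : 0 < p)
    (ha : 0 < a) (hflim : Tendsto f (𝓝[>] 0) atTop)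
    (hcond : ∀ ε ∈ Set.Ioo 0 a, ∀ N : ℕ, ∃ n : ℕ,
      (∀ i, 1 ≤ i → i ≤ N → f ε < Mw w i n) ∧ (∀ i, 1 ≤ i → ε < Mw w i n))
    (hx : Summable fun j => |x j| ^ p) {δ : ℝ} (hδ : 0 < δ) :
    ∃ᶠ n in atTop, ∑' j, |Siter w n x j| ^ p < δ := by
  rw [frequently_atTop]
  intro m
  have hhead : Tendsto (fun ε => (∑' i, |x i| ^ p) / f ε ^ p) (𝓝[>] 0) (𝓝 0) :=
    tendsto_const_nhds.div_atTop ((tendsto_rpow_atTop hp).comp hflim)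
  have hIoo : ∀ᶠ ε in 𝓝[>] (0 : ℝ), ε ∈ Set.Ioo 0 a := Ioo_mem_nhdsGT ha
  obtain ⟨ε, hεa, hfε, hheadε, hfm⟩ := (hIoo.and <|
    (hflim.eventually_gt_atTop 0).and <| (hhead.eventually (gt_mem_nhds (half_pos hδ))).and <|
    (Finset.range m).eventually_all.2 fun j _ => hflim.eventually_gt_atTop (Mw w 1 j)).exists
  have htail : Tendsto (fun N => (∑' i, |x (i + N)| ^ p) / ε ^ p) atTop (𝓝 0) := by
    simpa using (tendsto_sum_nat_add fun i => |x i| ^ p).div_const (ε ^ p)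
  obtain ⟨N, hN, htailN⟩ :=
    ((eventually_ge_atTop 1).and (htail.eventually (gt_mem_nhds (half_pos hδ)))).exists
  obtain ⟨n, hfM, hεM⟩ := hcond ε hεa N
  refine ⟨n, ?_, ?_⟩
  · -- `f ε` separates `Mw w 1 n` from the finitely many `Mw w 1 j`, `j < m`.
    by_contra! hnm
    exact (hfm n (Finset.mem_range.2 hnm)).not_gt (hfM 1 le_rfl hN)
  · calc ∑' j, |Siter w n x j| ^ p
        ≤ (∑' i, |x i| ^ p) / f ε ^ p + (∑' i, |x (i + N)| ^ p) / ε ^ p :=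
          tsum_Siter_rpow_le hp hx hεa.1 hfε (fun i hi => (hεM i hi).le)
            fun i hi hiN => (hfM i hi hiN).le
      _ < δ / 2 + δ / 2 := add_lt_add hheadε htailN
      _ = δ := add_halves δ

theorem sufficient_condition_lp_general (p : ℝ) (hp : 1 ≤ p)
    (w : ℕ → ℝ)
    (a : ℝ) (ha : 0 < a) (f : ℝ → ℝ)
    (hflim : Tendsto f (𝓝[>] 0) atTop)
    (hcond : ∀ ε ∈ Set.Ioo 0 a, ∀ N : ℕ, ∃ n : ℕ, 1 ≤ n ∧
      (∀ i, 1 ≤ i → i ≤ N → f ε < Mw w i n) ∧ (∀ i, 1 ≤ i → ε < Mw w i n)) :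
    ∀ x : ℕ → ℝ, Summable (fun j => |x j| ^ p) → x ≠ 0 →
      ∃ nk : ℕ → ℕ, StrictMono nk ∧ (∀ k, 1 ≤ nk k) ∧
        Tendsto (fun k => (∑' j, |Siter w (nk k) x j| ^ p) ^ (1 / p)) atTop (𝓝 0) := by
  intro x hx _
  have hp0 : 0 < p := zero_lt_one.trans_le hp
  have hsum : MapClusterPt 0 atTop fun n => ∑' j, |Siter w n x j| ^ p :=
    mapClusterPt_zero_of_frequently_lt (fun n => tsum_nonneg fun j => by positivity)
      fun δ hδ => frequently_tsum_Siter_rpow_lt hp0 ha hflim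
        (fun ε hε N => (hcond ε hε N).imp fun _ hn => hn.2) hx hδ
  have hroot : Tendsto (fun s : ℝ => s ^ (1 / p)) (𝓝 0) (𝓝 0) := by
    have := (Real.continuousAt_rpow_const 0 (1 / p) (Or.inr (by positivity))).tendsto
    rwa [Real.zero_rpow (by positivity)] at this
  obtain ⟨ψ, hψ, hlim⟩ := (hsum.tendsto_comp hroot).tendsto_subseq
  exact ⟨fun k => ψ (k + 1), fun _ _ h => hψ (Nat.succ_lt_succ h),
    fun k => (Nat.succ_pos k).trans_le (hψ.id_le _), hlim.comp (tendsto_add_atTop_nat 1)⟩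

/-- Sufficient condition for strong hypercyclicity on `ℓ^p`: suppose there are `a > 0` and
`f : (0,a) → (0,∞)` with `f(x) → ∞` as `x → 0⁺`, such that for every `ε ∈ (0,a)` and every
`N ∈ ℕ` there is `n ∈ ℕ` with `M_i^n > f(ε)` for all `1 ≤ i ≤ N` and `ε < M_i^n` for all
`i ≥ 1`. Then for every nonzero `x ∈ ℓ^p` there is an increasing sequence `(n_k)` with
`‖S^{n_k} x‖_p → 0`. -/
theorem sufficient_condition_lp (p : ℝ) (hp : 1 ≤ p)
    (w : ℕ → ℝ) (hw : ∀ n, 1 ≤ n → 0 < w n)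
    (hub : ∃ C : ℝ, ∀ n, 1 ≤ n → w n ≤ C)
    (a : ℝ) (ha : 0 < a) (f : ℝ → ℝ)
    (hfpos : ∀ x ∈ Set.Ioo 0 a, 0 < f x)
    (hflim : Tendsto f (𝓝[>] 0) atTop)
    (hcond : ∀ ε ∈ Set.Ioo 0 a, ∀ N : ℕ, ∃ n : ℕ, 1 ≤ n ∧
      (∀ i, 1 ≤ i → i ≤ N → f ε < Mw w i n) ∧ (∀ i, 1 ≤ i → ε < Mw w i n)) :
    ∀ x : ℕ → ℝ, Summable (fun j => |x j| ^ p) → x ≠ 0 →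
      ∃ nk : ℕ → ℕ, StrictMono nk ∧ (∀ k, 1 ≤ nk k) ∧
        Tendsto (fun k => (∑' j, |Siter w (nk k) x j| ^ p) ^ (1 / p)) atTop (𝓝 0) :=
  sufficient_condition_lp_general p hp w a ha f hflim hcond
end

section
/- Suppose B_w is a weighted backward shift on c₀ with forward shift S, and there exist a > 0 and f : (0,a) → (0,∞) with f(x) → ∞ as x → 0⁺ such that for every ε ∈ (0,a) and every N ∈ ℕ there exists n ∈ ℕ with M_i^n > f(ε) for all i ≤ N and ε < M_i^n for all i. Then for every nonzero x ∈ c₀ there exists an increasing sequence (n_k) with ‖S^{n_k} x‖_∞ → 0. -/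
/-!
Fix `δ > 0` and a bound `B` for `|x|`. Choose `ε ∈ (0, a)` with `f ε ≥ B / δ`, then `N` with
`|x m| ≤ ε δ` for `m ≥ N`, and let `n` be given by the hypothesis for `ε` and `N`. Every
coordinate of `S^n x` has the form `x m / M_{m+1}^n`: for `m < N` it is at most `B / f ε ≤ δ`,
and for `m ≥ N` at most `ε δ / ε = δ`. Since the weights are bounded by some `C ≥ 1`, asking
also `f ε ≥ C ^ m₀` forces `n > m₀`, so such `n` occur along a strictly increasing sequence,
with `δ = 1 / (k + 1)` at the `k`-th step.
-/

open Filter Topology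

section WeightedShift

variable {w : ℕ → ℝ}

lemma Mw_pos (hw : ∀ n, 1 ≤ n → 0 < w n) {i : ℕ} (hi : 1 ≤ i) (n : ℕ) : 0 < Mw w i n :=
  Finset.prod_pos fun t _ => hw _ (hi.trans (Nat.le_add_right i t))

lemma Mw_le_pow (hw : ∀ n, 1 ≤ n → 0 < w n) {C : ℝ} (hC : ∀ n, 1 ≤ n → w n ≤ C) {i : ℕ}
    (hi : 1 ≤ i) (n : ℕ) : Mw w i n ≤ C ^ n := by
  have hle : ∀ t, 1 ≤ i + t := fun t => hi.trans (Nat.le_add_right i t)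
  calc Mw w i n ≤ ∏ _t ∈ Finset.range n, C :=
        Finset.prod_le_prod (fun t _ => (hw _ (hle t)).le) (fun t _ => hC _ (hle t))
    _ = C ^ n := by simp

lemma abs_Siter_le (hw : ∀ n, 1 ≤ n → 0 < w n) {x : ℕ → ℝ} {δ : ℝ} (hδ : 0 ≤ δ) {n : ℕ}
    (hx : ∀ m, |x m| ≤ δ * Mw w (m + 1) n) (j : ℕ) : |Siter w n x j| ≤ δ := by
  unfold Siter
  split_ifs with hj
  · simpa using hδ
  · have hM := Mw_pos hw (Nat.le_add_left 1 (j - n)) n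
    rw [abs_div, abs_of_pos hM, div_le_iff₀ hM]
    exact hx (j - n)

lemma frequently_forall_abs_Siter_le (hw : ∀ n, 1 ≤ n → 0 < w n)
    (hub : ∃ C : ℝ, ∀ n, 1 ≤ n → w n ≤ C) {a : ℝ} (ha : 0 < a) {f : ℝ → ℝ}
    (hflim : Tendsto f (𝓝[>] 0) atTop)
    (hcond : ∀ ε ∈ Set.Ioo 0 a, ∀ N : ℕ, ∃ n : ℕ, 1 ≤ n ∧
      (∀ i, 1 ≤ i → i ≤ N → f ε < Mw w i n) ∧ (∀ i, 1 ≤ i → ε < Mw w i n))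
    {x : ℕ → ℝ} (hx : Tendsto x atTop (𝓝 0)) {δ : ℝ} (hδ : 0 < δ) :
    ∃ᶠ n in atTop, 1 ≤ n ∧ ∀ j, |Siter w n x j| ≤ δ := by
  obtain ⟨C, hC⟩ := hub
  have hC' : ∀ n, 1 ≤ n → w n ≤ max C 1 := fun n hn => (hC n hn).trans (le_max_left _ _)
  obtain ⟨B, hB⟩ := isBounded_iff_forall_norm_le.mp (Metric.isBounded_range_of_tendsto x hx)
  rw [frequently_atTop]
  intro m₀
  obtain ⟨ε, hfε, hε⟩ : ∃ ε, max (B / δ) (max C 1 ^ m₀) ≤ f ε ∧ ε ∈ Set.Ioo 0 a :=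
    ((hflim.eventually_ge_atTop _).and (Ioo_mem_nhdsGT ha)).exists
  obtain ⟨N, hN⟩ : ∃ N, ∀ m ≥ N, |x m| ≤ ε * δ := by
    obtain ⟨N, hN⟩ := Metric.tendsto_atTop.mp hx (ε * δ) (mul_pos hε.1 hδ)
    exact ⟨N, fun m hm => by simpa [Real.dist_eq] using (hN m hm).le⟩
  obtain ⟨n, hn, hsmall, hlarge⟩ := hcond ε hε (N + 1)
  refine ⟨n, ?_, hn, abs_Siter_le hw hδ.le fun m => ?_⟩
  · by_contra! hlt
    have := calc max C 1 ^ m₀ ≤ f ε := (le_max_right _ _).trans hfε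
      _ < Mw w 1 n := hsmall 1 le_rfl (Nat.le_add_left 1 N)
      _ ≤ max C 1 ^ n := Mw_le_pow hw hC' le_rfl n
      _ ≤ max C 1 ^ m₀ := pow_le_pow_right₀ (le_max_right _ _) hlt.le
    exact this.false
  · rcases lt_or_ge m N with hm | hm
    · calc |x m| ≤ B := hB _ ⟨m, rfl⟩
        _ = δ * (B / δ) := by field_simp
        _ ≤ δ * Mw w (m + 1) n := by
          gcongr
          exact ((le_max_left _ _).trans hfε).trans
            (hsmall (m + 1) (Nat.le_add_left 1 m) (by omega)).le
    · calc |x m| ≤ ε * δ := hN m hm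
        _ ≤ δ * Mw w (m + 1) n := by
          rw [mul_comm]
          gcongr
          exact (hlarge (m + 1) (Nat.le_add_left 1 m)).le

end WeightedShift

theorem sufficient_condition_c0_general
    (w : ℕ → ℝ) (hw : ∀ n, 1 ≤ n → 0 < w n)
    (hub : ∃ C : ℝ, ∀ n, 1 ≤ n → w n ≤ C)
    (a : ℝ) (ha : 0 < a) (f : ℝ → ℝ)
    (hflim : Tendsto f (𝓝[>] 0) atTop)
    (hcond : ∀ ε ∈ Set.Ioo 0 a, ∀ N : ℕ, ∃ n : ℕ, 1 ≤ n ∧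
      (∀ i, 1 ≤ i → i ≤ N → f ε < Mw w i n) ∧ (∀ i, 1 ≤ i → ε < Mw w i n)) :
    ∀ x : ℕ → ℝ, Tendsto x atTop (𝓝 0) → x ≠ 0 →
      ∃ nk : ℕ → ℕ, StrictMono nk ∧ (∀ k, 1 ≤ nk k) ∧
        Tendsto (fun k => ⨆ j, |Siter w (nk k) x j|) atTop (𝓝 0) := by
  intro x hx _
  obtain ⟨nk, hmono, hnk⟩ := extraction_forall_of_frequently fun k : ℕ =>
    frequently_forall_abs_Siter_le hw hub ha hflim hcond hx (δ := 1 / ((k : ℝ) + 1))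
      Nat.one_div_pos_of_nat
  refine ⟨nk, hmono, fun k => (hnk k).1, ?_⟩
  exact squeeze_zero (fun k => Real.iSup_nonneg fun j => abs_nonneg _)
    (fun k => ciSup_le (hnk k).2) tendsto_one_div_add_atTop_nhds_zero_nat

/-- Sufficient condition for strong hypercyclicity on `c₀`: suppose there are `a > 0` and
`f : (0,a) → (0,∞)` with `f(x) → ∞` as `x → 0⁺`, such that for every `ε ∈ (0,a)` and every
`N ∈ ℕ` there is `n ∈ ℕ` with `M_i^n > f(ε)` for all `1 ≤ i ≤ N` and `ε < M_i^n` for all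
`i ≥ 1`. Then for every nonzero `x ∈ c₀` there is an increasing sequence `(n_k)` with
`‖S^{n_k} x‖_∞ → 0`. -/
theorem sufficient_condition_c0
    (w : ℕ → ℝ) (hw : ∀ n, 1 ≤ n → 0 < w n)
    (hub : ∃ C : ℝ, ∀ n, 1 ≤ n → w n ≤ C)
    (a : ℝ) (ha : 0 < a) (f : ℝ → ℝ)
    (hfpos : ∀ x ∈ Set.Ioo 0 a, 0 < f x)
    (hflim : Tendsto f (𝓝[>] 0) atTop)
    (hcond : ∀ ε ∈ Set.Ioo 0 a, ∀ N : ℕ, ∃ n : ℕ, 1 ≤ n ∧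
      (∀ i, 1 ≤ i → i ≤ N → f ε < Mw w i n) ∧ (∀ i, 1 ≤ i → ε < Mw w i n)) :
    ∀ x : ℕ → ℝ, Tendsto x atTop (𝓝 0) → x ≠ 0 →
      ∃ nk : ℕ → ℕ, StrictMono nk ∧ (∀ k, 1 ≤ nk k) ∧
        Tendsto (fun k => ⨆ j, |Siter w (nk k) x j|) atTop (𝓝 0) :=
  sufficient_condition_c0_general w hw hub a ha f hflim hcond
end

section
/- With w defined by w_n = 2 for odd n and w_n = (2 w_{n/2})^{-1} for even n, and M_i^k = w_i ⋯ w_{i+k-1}, for all i,k ∈ ℕ one has (M_i^k)^{-1} = M_{2i-1}^{2k} = M_{2i}^{2k}. -/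
open Filter Topology

/-- The weight sequence: `w n = 2` for odd `n`, `w n = (2 * w (n/2))⁻¹` for even `n`. -/
noncomputable def petrovW : ℕ → ℝ
  | 0 => 2
  | (n + 1) => if (n + 1) % 2 = 1 then 2 else (2 * petrovW ((n + 1) / 2))⁻¹
decreasing_by omega

/-! The weights pair up: each window `w (2m-1), w (2m)` or `w (2m), w (2m+1)` multiplies to
`(w m)⁻¹`, because one factor of the pair is odd (`= 2`) and the other is `(2 w m)⁻¹`. Hence the
window of length `2k` starting at `2i-1` or `2i` splits into `k` pairs whose products are the
inverses of the factors of `M_i^k`. -/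

theorem petrovW_two_mul_add_one (n : ℕ) : petrovW (2 * n + 1) = 2 := by
  rw [petrovW, if_pos (by omega)]

theorem petrovW_two_mul {n : ℕ} (hn : n ≠ 0) : petrovW (2 * n) = (2 * petrovW n)⁻¹ := by
  obtain ⟨m, rfl⟩ := Nat.exists_eq_succ_of_ne_zero hn
  rw [show 2 * (m + 1) = (2 * m + 1) + 1 by ring, petrovW, if_neg (by omega),
    show (2 * m + 1 + 1) / 2 = m + 1 by omega]

theorem petrovW_two_mul_sub_one_mul_two_mul {m : ℕ} (hm : m ≠ 0) :
    petrovW (2 * m - 1) * petrovW (2 * m) = (petrovW m)⁻¹ := by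
  rw [show 2 * m - 1 = 2 * (m - 1) + 1 by omega, petrovW_two_mul_add_one, petrovW_two_mul hm,
    mul_inv]
  ring

theorem petrovW_two_mul_mul_two_mul_add_one {m : ℕ} (hm : m ≠ 0) :
    petrovW (2 * m) * petrovW (2 * m + 1) = (petrovW m)⁻¹ := by
  rw [petrovW_two_mul_add_one, petrovW_two_mul hm, mul_inv]
  ring

theorem Mw_two_mul (w : ℕ → ℝ) (j k : ℕ) :
    Mw w j (2 * k) = ∏ t ∈ Finset.range k, w (j + 2 * t) * w (j + 2 * t + 1) := by
  induction k with
  | zero => simp [Mw]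
  | succ k ih =>
    rw [Finset.prod_range_succ, ← ih, Mw, Mw, show 2 * (k + 1) = 2 * k + 1 + 1 by ring,
      Finset.prod_range_succ, Finset.prod_range_succ, mul_assoc, add_assoc j]

theorem inv_Mw_eq_Mw_two_mul {w : ℕ → ℝ} {i j k : ℕ}
    (hpair : ∀ t < k, w (j + 2 * t) * w (j + 2 * t + 1) = (w (i + t))⁻¹) :
    (Mw w i k)⁻¹ = Mw w j (2 * k) := by
  rw [Mw_two_mul, Mw, ← Finset.prod_inv_distrib]
  exact Finset.prod_congr rfl fun t ht => (hpair t (Finset.mem_range.mp ht)).symm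

theorem petrovW_M_two_inverse_general (i k : ℕ) (hi : 1 ≤ i) :
    (Mw petrovW i k)⁻¹ = Mw petrovW (2 * i - 1) (2 * k) ∧
    (Mw petrovW i k)⁻¹ = Mw petrovW (2 * i) (2 * k) := by
  constructor <;> refine inv_Mw_eq_Mw_two_mul fun t _ => ?_
  · rw [show 2 * i - 1 + 2 * t = 2 * (i + t) - 1 by omega,
      show 2 * (i + t) - 1 + 1 = 2 * (i + t) by omega]
    exact petrovW_two_mul_sub_one_mul_two_mul (by omega)
  · rw [← mul_add]
    exact petrovW_two_mul_mul_two_mul_add_one (by omega)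

/-- For the weight sequence `petrovW`, `(M_i^k)⁻¹ = M_{2i-1}^{2k} = M_{2i}^{2k}` for all
`i, k ≥ 1`. -/
theorem petrovW_M_two_inverse (i k : ℕ) (hi : 1 ≤ i) (hk : 1 ≤ k) :
    (Mw petrovW i k)⁻¹ = Mw petrovW (2 * i - 1) (2 * k) ∧
    (Mw petrovW i k)⁻¹ = Mw petrovW (2 * i) (2 * k) :=
  petrovW_M_two_inverse_general i k hi
end

section
/- Define a_1 = 1, a_k = 4 a_{k-1} + 1 for k ≥ 2, and w by w_n = 2 for odd n and w_n = (2 w_{n/2})^{-1} for even n. Then inf_{i ≥ 1} M_i^{a_k} ≥ 4^{-k} for every k ∈ ℕ, where M_i^m = w_i ⋯ w_{i+m-1}. -/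
/-!
Since `w` only takes the values `2` and `1/4`, and an adjacent pair `w_j w_{j+1}` is the
inverse of `w` at the half index `⌈j/2⌉`, every block of length `2a` is the inverse of a
block of length `a`, so every block of length `4a` equals a block of length `a`:
`M_i^{4a} = M_j^a` with `j = ⌈⌈i/2⌉/2⌉`. Hence `M_i^{a_{k+1}} = M_j^{a_k} w_{i+4a_k} ≥ 4^{-k} · 4^{-1}`.
-/

open Filter Topology

/-- The sequence `a_1 = 1`, `a_k = 4 a_{k-1} + 1` (with `aSeq 0 = 0` as junk value). -/
def aSeq : ℕ → ℕ
  | 0 => 0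
  | 1 => 1
  | (k + 2) => 4 * aSeq (k + 1) + 1

section Mw

variable (w : ℕ → ℝ) (i : ℕ)

@[simp]
lemma Mw_zero : Mw w i 0 = 1 := Finset.prod_range_zero _

lemma Mw_succ (n : ℕ) : Mw w i (n + 1) = Mw w i n * w (i + n) :=
  Finset.prod_range_succ _ _

end Mw

lemma petrovW_of_pos {n : ℕ} (hn : 1 ≤ n) :
    petrovW n = if n % 2 = 1 then 2 else (2 * petrovW (n / 2))⁻¹ := by
  obtain ⟨m, rfl⟩ := Nat.exists_eq_add_of_le' hn
  rw [petrovW]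

lemma petrovW_eq_two_or_eq_inv_four {n : ℕ} (hn : 1 ≤ n) :
    petrovW n = 2 ∨ petrovW n = 4⁻¹ := by
  induction n using Nat.strong_induction_on with
  | _ n ih =>
    rw [petrovW_of_pos hn]
    split_ifs
    · exact Or.inl rfl
    · rcases ih (n / 2) (by omega) (by omega) with h | h <;> norm_num [h]

lemma inv_four_le_petrovW {n : ℕ} (hn : 1 ≤ n) : (4 : ℝ)⁻¹ ≤ petrovW n := by
  rcases petrovW_eq_two_or_eq_inv_four hn with h | h <;> norm_num [h]

lemma petrovW_mul_petrovW_succ {j : ℕ} (hj : 1 ≤ j) :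
    petrovW j * petrovW (j + 1) = (petrovW ((j + 1) / 2))⁻¹ := by
  rw [petrovW_of_pos hj, petrovW_of_pos (Nat.le_succ_of_le hj)]
  rcases Nat.mod_two_eq_zero_or_one j with h | h
  · rw [if_neg (by omega), if_pos (by omega), show (j + 1) / 2 = j / 2 by omega, mul_inv]
    ring
  · rw [if_pos h, if_neg (by omega), mul_inv]
    ring

lemma Mw_petrovW_two_mul (a : ℕ) {i : ℕ} (hi : 1 ≤ i) :
    Mw petrovW i (2 * a) = (Mw petrovW ((i + 1) / 2) a)⁻¹ := by
  induction a with
  | zero => simp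
  | succ a ih =>
    rw [show 2 * (a + 1) = 2 * a + 1 + 1 by ring, Mw_succ, Mw_succ, ih, mul_assoc,
      ← add_assoc, petrovW_mul_petrovW_succ (by omega), Mw_succ, mul_inv,
      show (i + 2 * a + 1) / 2 = (i + 1) / 2 + a by omega]

lemma Mw_petrovW_four_mul (a : ℕ) {i : ℕ} (hi : 1 ≤ i) :
    Mw petrovW i (4 * a) = Mw petrovW (((i + 1) / 2 + 1) / 2) a := by
  rw [show 4 * a = 2 * (2 * a) by ring, Mw_petrovW_two_mul _ hi,
    Mw_petrovW_two_mul _ (by omega), inv_inv]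

lemma aSeq_succ (k : ℕ) : aSeq (k + 1) = 4 * aSeq k + 1 := by
  cases k <;> rfl

lemma inv_four_pow_le_Mw_petrovW_aSeq (k : ℕ) {i : ℕ} (hi : 1 ≤ i) :
    (4 : ℝ)⁻¹ ^ k ≤ Mw petrovW i (aSeq k) := by
  induction k generalizing i with
  | zero => simp [aSeq]
  | succ k ih =>
    rw [aSeq_succ, Mw_succ, Mw_petrovW_four_mul _ hi, pow_succ]
    have hblock := ih (i := ((i + 1) / 2 + 1) / 2) (by omega)
    exact mul_le_mul hblock (inv_four_le_petrovW (by omega)) (by norm_num)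
      (le_trans (by positivity) hblock)

theorem petrovW_M_inf_aSeq_general (k : ℕ) :
    ∀ i, 1 ≤ i → (4 : ℝ) ^ (-(k : ℤ)) ≤ Mw petrovW i (aSeq k) := by
  intro i hi
  rw [zpow_neg, zpow_natCast, ← inv_pow]
  exact inv_four_pow_le_Mw_petrovW_aSeq k hi

/-- For the weight sequence `petrovW` and `a_1 = 1`, `a_k = 4 a_{k-1} + 1`:
`inf_{i ≥ 1} M_i^{a_k} ≥ 4^{-k}` for every `k ≥ 1`. -/
theorem petrovW_M_inf_aSeq (k : ℕ) (hk : 1 ≤ k) :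
    ∀ i, 1 ≤ i → (4 : ℝ) ^ (-(k : ℤ)) ≤ Mw petrovW i (aSeq k) :=
  petrovW_M_inf_aSeq_general k
end
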